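/- For every n×n matrix A and every nonempty subset S of {1,...,n}, the cycle-sum satisfies C_S(A) = Σ_{partitions S_1⊔⋯⊔S_k = S} (-1)^{|S|-k} (k-1)! D_{S_1}(A)⋯D_{S_k}(A), where the sum is over all set-partitions of S into nonempty blocks. -/

import Mathlib

open scoped Classical

/-- The cycle-sum `C_S(A)`: sum over all cyclic orderings of `S` of the
corresponding cyclic products of entries of `A`. -/
noncomputable def cycleSum {n : ℕ} (A : Matrix (Fin n) (Fin n) ℂ) (S : Finset (Fin n)) : ℂ :=
  ∑ σ ∈ Finset.univ.filter
      (fun σ : Equiv.Perm (Fin n) =>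
        σ.IsCycleOn (S : Set (Fin n)) ∧ ∀ i ∉ S, σ i = i),
    ∏ i ∈ S, A i (σ i)

/-- The principal minor of `A` with row and column set `S`. -/
noncomputable def pminor {n : ℕ} (A : Matrix (Fin n) (Fin n) ℂ) (S : Finset (Fin n)) : ℂ :=
  (A.submatrix (fun i : S => (i : Fin n)) (fun i : S => (i : Fin n))).det

/-!
Expanding every principal minor by the Leibniz formula, `∏_{T ∈ P} D_T(A)` is the sum of
`sign σ ∏_{i ∈ S} a_{i,σ(i)}` over the permutations `σ` of `S` that map every block of `P` to
itself. Exchanging the two sums, the coefficient of this term is `∑ (-1)^(|S|-|P|) (|P|-1)!` over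
the partitions `P` of `S` into `σ`-invariant blocks, that is, over the partitions of the set of
cycles of `σ`. Since `(-1)^(k-1) (k-1)!` is the Möbius function `μ(P, ⊤)` of the partition lattice
for `P` with `k` blocks, this sum vanishes unless `σ` has a single cycle on `S`, where it equals
`sign σ` (and `sign σ ^ 2 = 1`). It is computed by splitting off the block containing a chosen
element `a ∈ S`; this recursion shifts the argument of the rising factorial, so it is run for the
weight `(-1)^k x (x+1) ⋯ (x+k-1)`, whose sum over invariant partitions is `(-x)^c` when `σ` has
`c` cycles on `S`.
-/

open Finset
open scoped Nat

lemma neg_one_pow_sub_of_le {R : Type*} [Ring R] {m n : ℕ} (h : n ≤ m) :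
    (-1 : R) ^ (m - n) = (-1) ^ m * (-1) ^ n := by
  obtain ⟨k, rfl⟩ := Nat.exists_eq_add_of_le h
  rw [Nat.add_sub_cancel_left, pow_add, ((Commute.neg_one_left _).pow_left n).eq, mul_assoc,
    ← pow_add, Even.neg_one_pow ⟨n, rfl⟩, mul_one]

theorem Finset.sum_powerset_filter_mem_pow {β R : Type*} [DecidableEq β] [CommSemiring R]
    {u : Finset β} {a : β} (ha : a ∈ u) (x : R) :
    ∑ C ∈ u.powerset with a ∈ C, x ^ #(u \ C) = (x + 1) ^ (#u - 1) := by
  rw [← insert_erase ha, sum_filter, sum_powerset_insert (notMem_erase a u),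
    sum_eq_zero fun t ht => if_neg fun h => notMem_erase a u (mem_powerset.1 ht h), zero_add,
    card_insert_of_notMem (notMem_erase a u), Nat.add_sub_cancel, add_comm,
    ← sum_pow_mul_eq_add_pow]
  refine sum_congr rfl fun t ht => ?_
  rw [if_pos (mem_insert_self a t), insert_sdiff_insert, sdiff_insert_of_notMem (notMem_erase a u),
    card_sdiff_of_subset (mem_powerset.1 ht), one_pow, one_mul]

namespace Finpartition

variable {α : Type*} [DecidableEq α] {s B : Finset α}

def erasePart (P : Finpartition s) (hB : B ∈ P.parts) : Finpartition (s \ B) :=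
  P.ofSubset (erase_subset B P.parts) <| by
    ext x
    simp only [mem_sup, mem_erase, mem_sdiff, id_eq]
    constructor
    · rintro ⟨T, ⟨hTB, hT⟩, hx⟩
      exact ⟨P.le hT hx, fun hxB => hTB (P.eq_of_mem_parts hT hB hx hxB)⟩
    · rintro ⟨hxs, hxB⟩
      obtain ⟨T, hT, hx⟩ := P.exists_mem hxs
      exact ⟨T, ⟨fun h => hxB (h ▸ hx), hT⟩, hx⟩

@[simp]
lemma erasePart_parts (P : Finpartition s) (hB : B ∈ P.parts) :
    (P.erasePart hB).parts = P.parts.erase B := rfl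

lemma notMem_parts_sdiff (P : Finpartition (s \ B)) : B ∉ P.parts := fun h =>
  P.ne_empty h (eq_empty_of_forall_notMem fun _ hx => (mem_sdiff.1 (P.le h hx)).2 hx)

lemma sigma_ext {B C : Finset α} {P : Finpartition (s \ B)} {Q : Finpartition (s \ C)} (h : B = C)
    (hPQ : P.parts = Q.parts) :
    (⟨B, P⟩ : Σ X : Finset α, Finpartition (s \ X)) = ⟨C, Q⟩ := by
  subst h
  exact congrArg _ (Finpartition.ext hPQ)

theorem sum_eq_sum_sum_sdiff_part {M : Type*} [AddCommMonoid M] {a : α} (ha : a ∈ s)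
    (f : Finset (Finset α) → M) :
    ∑ P : Finpartition s, f P.parts =
      ∑ B ∈ s.powerset with a ∈ B, ∑ P : Finpartition (s \ B), f (insert B P.parts) := by
  rw [← sum_sigma (s.powerset.filter (a ∈ ·)) (fun B => (univ : Finset (Finpartition (s \ B))))
    fun x => f (insert x.1 x.2.parts)]
  have mem_of_mem_sigma {x : Σ X : Finset α, Finpartition (s \ X)}
      (hx : x ∈ (s.powerset.filter (a ∈ ·)).sigma fun _ => univ) : x.1 ⊆ s ∧ a ∈ x.1 := by
    simpa using hx
  refine sum_bij' (fun P _ => ⟨P.part a, P.erasePart (P.part_mem.2 ha)⟩)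
    (fun x hx => x.2.extend (ne_empty_of_mem (mem_of_mem_sigma hx).2) sdiff_disjoint
      (sdiff_sup_cancel (mem_of_mem_sigma hx).1)) (fun P _ => by simp [ha])
    (fun _ _ => mem_univ _) (fun P _ => ?_) (fun x hx => ?_) (fun P _ => ?_)
  · exact Finpartition.ext (insert_erase (P.part_mem.2 ha))
  · obtain ⟨hBs, haB⟩ := mem_of_mem_sigma hx
    have hpart : (x.2.extend (ne_empty_of_mem haB) sdiff_disjoint (sdiff_sup_cancel hBs)).part a
        = x.1 := part_eq_of_mem _ (mem_insert_self _ _) haB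
    refine sigma_ext hpart ?_
    simp only [erasePart_parts, extend_parts, hpart]
    exact erase_insert (notMem_parts_sdiff x.2)
  · simp only [erasePart_parts, insert_erase (P.part_mem.2 ha)]

lemma forall_part_eq_part_apply_iff (P : Finpartition s) {f : α → α} (hf : ∀ i ∈ s, f i ∈ s) :
    (∀ i ∈ s, P.part i = P.part (f i)) ↔ ∀ T ∈ P.parts, ∀ i ∈ T, f i ∈ T := by
  refine ⟨fun h T hT i hi => ?_, fun h i hi => ?_⟩
  · have his := P.le hT hi
    rw [← P.part_eq_of_mem hT hi, h i his]
    exact P.mem_part (hf i his)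
  · exact (P.part_eq_of_mem (P.part_mem.2 hi) (h _ (P.part_mem.2 hi) i (P.mem_part hi))).symm

end Finpartition

namespace Equiv.Perm

variable {α : Type*} {σ : Perm α} {S B : Finset α}

lemma apply_mem_of_forall_notMem_apply_eq (hσ : ∀ i ∉ S, σ i = i) : ∀ i ∈ S, σ i ∈ S := by
  intro i hi
  by_contra h
  rw [σ.injective (hσ _ h)] at h
  exact h hi

variable [Fintype α]

lemma SameCycle.mem_of_forall_apply_mem {i j : α} (h : σ.SameCycle i j) (hB : ∀ i ∈ B, σ i ∈ B)
    (hi : i ∈ B) : j ∈ B := by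
  obtain ⟨k, -, rfl⟩ := h.exists_pow_eq'
  exact Set.MapsTo.perm_pow (s := B) (fun i hi => hB i hi) k hi

variable [DecidableEq α]

lemma apply_mem_sdiff (hS : ∀ i ∈ S, σ i ∈ S) (hB : ∀ i ∈ B, σ i ∈ B) :
    ∀ i ∈ S \ B, σ i ∈ S \ B := by
  intro i hi
  rw [mem_sdiff] at hi ⊢
  exact ⟨hS _ hi.1, fun h => hi.2 ((SameCycle.refl σ i).apply_left.mem_of_forall_apply_mem hB h)⟩

variable (σ) in
def cycleClass (i : α) : Finset α := {j | σ.SameCycle i j}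

lemma mem_cycleClass {i j : α} : j ∈ σ.cycleClass i ↔ σ.SameCycle i j := by
  simp [cycleClass]

lemma cycleClass_eq_iff {i j : α} : σ.cycleClass i = σ.cycleClass j ↔ σ.SameCycle i j := by
  refine ⟨fun h => ?_, fun h => ?_⟩
  · exact (mem_cycleClass.1 (h ▸ mem_cycleClass.2 (SameCycle.refl σ i))).symm
  · ext k
    simp only [mem_cycleClass]
    exact ⟨h.symm.trans, h.trans⟩

@[simp]
lemma cycleClass_apply (i : α) : σ.cycleClass (σ i) = σ.cycleClass i :=
  cycleClass_eq_iff.2 (SameCycle.refl σ i).apply_left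

lemma cycleClass_mem_image_iff (hB : ∀ i ∈ B, σ i ∈ B) {i : α} :
    σ.cycleClass i ∈ B.image σ.cycleClass ↔ i ∈ B := by
  refine ⟨fun h => ?_, mem_image_of_mem _⟩
  obtain ⟨j, hj, hji⟩ := mem_image.1 h
  exact (cycleClass_eq_iff.1 hji).mem_of_forall_apply_mem hB hj

-- Fixed points count as cycles, unlike in `Equiv.Perm.cycleType`.
variable (σ) in
def numCyclesOn (S : Finset α) : ℕ := #(S.image σ.cycleClass)

lemma image_cycleClass_sdiff (hB : ∀ i ∈ B, σ i ∈ B) :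
    (S \ B).image σ.cycleClass = S.image σ.cycleClass \ B.image σ.cycleClass := by
  ext X
  simp only [mem_image, mem_sdiff]
  constructor
  · rintro ⟨i, ⟨hiS, hiB⟩, rfl⟩
    exact ⟨⟨i, hiS, rfl⟩, fun h => hiB ((cycleClass_mem_image_iff hB).1 (mem_image.2 h))⟩
  · rintro ⟨⟨i, hiS, rfl⟩, h⟩
    exact ⟨i, ⟨hiS, fun hiB => h ⟨i, hiB, rfl⟩⟩, rfl⟩

lemma isCycleOn_iff_numCyclesOn_eq_one (hS : ∀ i ∈ S, σ i ∈ S) (hne : S.Nonempty) :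
    σ.IsCycleOn S ↔ σ.numCyclesOn S = 1 := by
  have hbij : Set.BijOn σ S S := (S.finite_toSet.injOn_iff_bijOn_of_mapsTo hS).1 σ.injective.injOn
  have hpos : 0 < #(S.image σ.cycleClass) := card_pos.2 (hne.image _)
  rw [numCyclesOn, show #(S.image σ.cycleClass) = 1 ↔ #(S.image σ.cycleClass) ≤ 1 by omega,
    card_le_one]
  simp only [forall_mem_image, cycleClass_eq_iff]
  exact ⟨fun h => h.2, fun h => ⟨hbij, h⟩⟩

lemma IsCycleOn.sign_eq (hσ : ∀ i ∉ S, σ i = i) (hc : σ.IsCycleOn S) (hne : S.Nonempty) :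
    sign σ = -(-1) ^ #S := by
  rcases (S : Set α).subsingleton_or_nontrivial with hsub | hnt
  · obtain ⟨a, rfl⟩ : ∃ a, S = {a} := card_eq_one.1 <| le_antisymm
      (card_le_one.2 fun x hx y hy => hsub hx hy) (card_pos.2 hne)
    have : σ = 1 := by
      ext i
      by_cases hi : i = a
      · subst hi
        simpa using hc.1.mapsTo (mem_coe.2 (mem_singleton_self i))
      · exact hσ i (by simpa using hi)
    simp [this]
  · have hsupp : σ.support = S := by
      ext i
      rw [mem_support]
      exact ⟨fun h => by_contra fun hi => h (hσ i hi), fun hi => hc.apply_ne hnt hi⟩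
    have hcyc : σ.IsCycle := isCycle_iff_exists_isCycleOn.2
      ⟨S, hnt, hc, fun x hx => mem_coe.2 (hsupp ▸ mem_support.2 hx)⟩
    rw [hcyc.sign, hsupp]

variable (σ) in
def invariantFinpartitions (S : Finset α) : Finset (Finpartition S) :=
  {P | ∀ T ∈ P.parts, ∀ i ∈ T, σ i ∈ T}

section Sums

variable {M R : Type*} [AddCommMonoid M]

-- An invariant set is the union of the cycles it meets.
lemma sum_invariant_subsets (hS : ∀ i ∈ S, σ i ∈ S) (f : Finset (Finset α) → M) :
    ∑ B ∈ S.powerset with ∀ i ∈ B, σ i ∈ B, f (B.image σ.cycleClass)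
      = ∑ C ∈ (S.image σ.cycleClass).powerset, f C := by
  refine sum_nbij' (Finset.image σ.cycleClass) (fun C => {i ∈ S | σ.cycleClass i ∈ C})
    (fun B hB => ?_) (fun C _ => ?_) (fun B hB => ?_) (fun C hC => ?_) (fun _ _ => rfl)
  · simp only [mem_filter, mem_powerset] at hB ⊢
    exact image_subset_image hB.1
  · simp only [mem_filter, mem_powerset]
    refine ⟨filter_subset _ _, fun i hi => ?_⟩
    simp only [cycleClass_apply] at hi ⊢
    exact ⟨hS _ hi.1, hi.2⟩
  · simp only [mem_filter, mem_powerset] at hB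
    ext i
    simp only [mem_filter, cycleClass_mem_image_iff hB.2]
    exact ⟨And.right, fun hi => ⟨hB.1 hi, hi⟩⟩
  · ext X
    simp only [mem_image, mem_filter]
    refine ⟨fun ⟨i, ⟨_, hi⟩, hX⟩ => hX ▸ hi, fun hX => ?_⟩
    obtain ⟨i, hi, rfl⟩ := mem_image.1 (mem_powerset.1 hC hX)
    exact ⟨i, ⟨hi, hX⟩, rfl⟩

theorem sum_invariant_subsets_pow [CommSemiring R] (hS : ∀ i ∈ S, σ i ∈ S) {a : α} (ha : a ∈ S)
    (x : R) :
    ∑ B ∈ S.powerset with a ∈ B ∧ ∀ i ∈ B, σ i ∈ B, x ^ σ.numCyclesOn (S \ B)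
      = (x + 1) ^ (σ.numCyclesOn S - 1) := by
  set O := S.image σ.cycleClass
  let g (C : Finset (Finset α)) : R := if σ.cycleClass a ∈ C then x ^ #(O \ C) else 0
  calc _ = ∑ B ∈ S.powerset with ∀ i ∈ B, σ i ∈ B,
        if a ∈ B then x ^ σ.numCyclesOn (S \ B) else 0 := by
        rw [sum_filter, sum_filter]
        exact sum_congr rfl fun B _ => by rw [ite_and]; split_ifs <;> rfl
    _ = ∑ B ∈ S.powerset with ∀ i ∈ B, σ i ∈ B, g (B.image σ.cycleClass) := by
        refine sum_congr rfl fun B hB => ?_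
        have hB := (mem_filter.1 hB).2
        simp only [g, O, cycleClass_mem_image_iff hB, numCyclesOn, image_cycleClass_sdiff hB]
    _ = ∑ C ∈ O.powerset with σ.cycleClass a ∈ C, x ^ #(O \ C) := by
        rw [sum_invariant_subsets hS g, sum_filter]
    _ = (x + 1) ^ (σ.numCyclesOn S - 1) := sum_powerset_filter_mem_pow (mem_image_of_mem _ ha) x

theorem sum_invariantFinpartitions_eq_sum_sdiff {a : α} (ha : a ∈ S) (w : ℕ → M) :
    ∑ P ∈ σ.invariantFinpartitions S, w #P.parts
      = ∑ B ∈ S.powerset with a ∈ B ∧ ∀ i ∈ B, σ i ∈ B,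
          ∑ P ∈ σ.invariantFinpartitions (S \ B), w (#P.parts + 1) := by
  simp only [invariantFinpartitions, sum_filter]
  rw [Finpartition.sum_eq_sum_sum_sdiff_part ha
    (fun ps => if ∀ T ∈ ps, ∀ i ∈ T, σ i ∈ T then w #ps else 0), sum_filter]
  refine sum_congr rfl fun B _ => ?_
  rw [ite_and]
  congr 1
  split_ifs with hB
  · refine sum_congr rfl fun P _ => ?_
    simp only [forall_mem_insert, and_iff_right hB, card_insert_of_notMem P.notMem_parts_sdiff]
  · exact sum_eq_zero fun P _ => if_neg fun h => hB (h B (mem_insert_self _ _))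

variable [CommRing R]

theorem sum_invariantFinpartitions_ascPochhammer (hS : ∀ i ∈ S, σ i ∈ S) (x : R) :
    ∑ P ∈ σ.invariantFinpartitions S, (-1) ^ #P.parts * (ascPochhammer R #P.parts).eval x
      = (-x) ^ σ.numCyclesOn S := by
  induction S using Finset.strongInduction generalizing x with | H S ih => ?_
  rcases S.eq_empty_or_nonempty with rfl | ⟨a, ha⟩
  · have hP (P : Finpartition (∅ : Finset α)) : P.parts = ∅ := P.parts_eq_empty_iff.2 rfl
    rw [sum_eq_single_of_mem ⊥ (by simp [invariantFinpartitions, hP])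
      fun P _ hP' => absurd (Finpartition.ext ((hP P).trans (hP ⊥).symm)) hP']
    simp [numCyclesOn, hP]
  have hstep : ∀ B ∈ {B ∈ S.powerset | a ∈ B ∧ ∀ i ∈ B, σ i ∈ B},
      ∑ P ∈ σ.invariantFinpartitions (S \ B),
        (-1) ^ (#P.parts + 1) * (ascPochhammer R (#P.parts + 1)).eval x
        = -x * (-(x + 1)) ^ σ.numCyclesOn (S \ B) := by
    intro B hB
    obtain ⟨hBS, haB, hB⟩ : B ⊆ S ∧ a ∈ B ∧ ∀ i ∈ B, σ i ∈ B := by simpa using hB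
    rw [← ih _ (sdiff_ssubset hBS ⟨a, haB⟩) (apply_mem_sdiff hS hB), mul_sum]
    refine sum_congr rfl fun P _ => ?_
    rw [ascPochhammer_succ_left, Polynomial.eval_mul, Polynomial.eval_comp, Polynomial.eval_add,
      Polynomial.eval_X, Polynomial.eval_one]
    ring
  have hpos : 0 < σ.numCyclesOn S := card_pos.2 ⟨_, mem_image_of_mem _ ha⟩
  rw [sum_invariantFinpartitions_eq_sum_sdiff ha fun k => (-1) ^ k * (ascPochhammer R k).eval x,
    sum_congr rfl hstep, ← mul_sum, sum_invariant_subsets_pow hS ha,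
    show -(x + 1) + 1 = -x by ring, ← pow_succ', Nat.sub_add_cancel hpos]

theorem sum_invariantFinpartitions_factorial (hS : ∀ i ∈ S, σ i ∈ S) {a : α} (ha : a ∈ S) :
    ∑ P ∈ σ.invariantFinpartitions S, (-1) ^ #P.parts * ((#P.parts - 1)! : R)
      = -0 ^ (σ.numCyclesOn S - 1) := by
  have hstep : ∀ B ∈ {B ∈ S.powerset | a ∈ B ∧ ∀ i ∈ B, σ i ∈ B},
      ∑ P ∈ σ.invariantFinpartitions (S \ B), (-1) ^ (#P.parts + 1) * ((#P.parts + 1 - 1)! : R)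
        = -(-1) ^ σ.numCyclesOn (S \ B) := by
    intro B hB
    obtain ⟨-, -, hB⟩ : B ⊆ S ∧ a ∈ B ∧ ∀ i ∈ B, σ i ∈ B := by simpa using hB
    rw [← sum_invariantFinpartitions_ascPochhammer (apply_mem_sdiff hS hB), ← sum_neg_distrib]
    refine sum_congr rfl fun P _ => ?_
    rw [ascPochhammer_eval_one, Nat.add_sub_cancel, pow_succ]
    ring
  rw [sum_invariantFinpartitions_eq_sum_sdiff ha fun k => (-1) ^ k * ((k - 1)! : R),
    sum_congr rfl hstep, sum_neg_distrib, sum_invariant_subsets_pow hS ha, neg_add_cancel]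

theorem sum_invariantFinpartitions_eq_ite_isCycleOn (hσ : ∀ i ∉ S, σ i = i) (hne : S.Nonempty) :
    ∑ P ∈ σ.invariantFinpartitions S, (-1) ^ (#S - #P.parts) * ((#P.parts - 1)! : R)
      = if σ.IsCycleOn S then (sign σ : R) else 0 := by
  obtain ⟨a, ha⟩ := hne
  have hS := apply_mem_of_forall_notMem_apply_eq hσ
  have hpos : 0 < σ.numCyclesOn S := card_pos.2 ⟨_, mem_image_of_mem _ ha⟩
  have hsum : ∑ P ∈ σ.invariantFinpartitions S, (-1) ^ (#S - #P.parts) * ((#P.parts - 1)! : R)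
      = (-1) ^ #S * -0 ^ (σ.numCyclesOn S - 1) := by
    rw [← sum_invariantFinpartitions_factorial hS ha, mul_sum]
    exact sum_congr rfl fun P _ => by rw [neg_one_pow_sub_of_le P.card_parts_le_card, mul_assoc]
  rw [hsum]
  by_cases hc : σ.IsCycleOn S
  · rw [if_pos hc, hc.sign_eq hσ ⟨a, ha⟩, (isCycleOn_iff_numCyclesOn_eq_one hS ⟨a, ha⟩).1 hc]
    push_cast
    ring
  · have hcount : σ.numCyclesOn S - 1 ≠ 0 := by
      have := mt (isCycleOn_iff_numCyclesOn_eq_one hS ⟨a, ha⟩).2 hc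
      omega
    rw [if_neg hc, zero_pow hcount, neg_zero, mul_zero]

end Sums

end Equiv.Perm

open Equiv

lemma pminor_eq_sum {n : ℕ} (A : Matrix (Fin n) (Fin n) ℂ) (T : Finset (Fin n)) :
    pminor A T =
      ∑ σ : Perm (Fin n) with ∀ i ∉ T, σ i = i, (Perm.sign σ : ℂ) * ∏ i ∈ T, A i (σ i) := by
  rw [pminor, ← Matrix.det_transpose, Matrix.det_apply', sum_subtype _ fun σ => mem_filter_univ σ]
  refine Fintype.sum_equiv (Perm.subtypeEquivSubtypePerm (· ∈ T)) _ _ fun π => ?_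
  rw [Perm.subtypeEquivSubtypePerm_apply_coe, Perm.sign_ofSubtype, ← prod_coe_sort T]
  simp [Perm.ofSubtype_apply_coe]

def Finpartition.blockRestrict {α R : Type*} [DecidableEq α] [Zero R] {S : Finset α}
    (P : Finpartition S) (A : Matrix α α R) : Matrix α α R :=
  Matrix.of fun i j => if P.part i = P.part j then A i j else 0

lemma prod_pminor_parts {n : ℕ} (A : Matrix (Fin n) (Fin n) ℂ) {S : Finset (Fin n)}
    (P : Finpartition S) : ∏ T ∈ P.parts, pminor A T = pminor (P.blockRestrict A) S := by
  set M := (P.blockRestrict A).submatrix (fun i : S => (i : Fin n)) (fun i : S => (i : Fin n))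
  -- Any linear order on the blocks will do for `BlockTriangular.det`; colex is one.
  let b (i : S) : Colex (Finset (Fin n)) := toColex (P.part i)
  have hM : M.BlockTriangular b := fun i j hij => if_neg fun h => hij.ne' (congrArg toColex h)
  rw [pminor, hM.det]
  refine prod_nbij' toColex ofColex (fun T hT => ?_) (fun k hk => ?_) (fun _ _ => rfl)
    (fun _ _ => rfl) (fun T hT => ?_)
  · obtain ⟨x, hx⟩ := P.nonempty_of_mem_parts hT
    exact mem_image.2 ⟨⟨x, P.le hT hx⟩, mem_univ _, by simp [b, P.part_eq_of_mem hT hx]⟩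
  · obtain ⟨i, -, rfl⟩ := mem_image.1 hk
    simp [b]
  · let e : {i : S // b i = toColex T} ≃ T :=
      { toFun i := ⟨i.1, (P.part_eq_iff_mem hT).1 (toColex_inj.1 i.2)⟩
        invFun i := ⟨⟨i, P.le hT i.2⟩, congrArg toColex (P.part_eq_of_mem hT i.2)⟩
        left_inv _ := rfl
        right_inv _ := rfl }
    rw [pminor, ← Matrix.det_submatrix_equiv_self e]
    congr 1
    ext i j
    have hij : P.part i = P.part j := toColex_inj.1 (i.2.trans j.2.symm)
    simp [M, e, Matrix.toSquareBlock, Matrix.toSquareBlockProp, Finpartition.blockRestrict, hij]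

lemma pminor_blockRestrict {n : ℕ} (A : Matrix (Fin n) (Fin n) ℂ) {S : Finset (Fin n)}
    (P : Finpartition S) :
    pminor (P.blockRestrict A) S = ∑ σ : Perm (Fin n) with ∀ i ∉ S, σ i = i,
      if P ∈ σ.invariantFinpartitions S then (Perm.sign σ : ℂ) * ∏ i ∈ S, A i (σ i) else 0 := by
  rw [pminor_eq_sum]
  refine sum_congr rfl fun σ hσ => ?_
  have hS := Perm.apply_mem_of_forall_notMem_apply_eq (mem_filter.1 hσ).2
  simp only [Finpartition.blockRestrict, Matrix.of_apply, prod_ite_zero,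
    P.forall_part_eq_part_apply_iff hS, Perm.invariantFinpartitions, mem_filter_univ, mul_ite,
    mul_zero]

/-- Cycle-sums in terms of principal minors:
`C_S(A) = Σ_{set-partitions S₁⊔⋯⊔S_k of S} (-1)^(|S|-k) (k-1)! D_{S₁}(A)⋯D_{S_k}(A)`. -/
theorem stmt9 (n : ℕ) (A : Matrix (Fin n) (Fin n) ℂ) (S : Finset (Fin n))
    (hS : S.Nonempty) :
    cycleSum A S =
      ∑ P : Finpartition S,
        (-1 : ℂ) ^ (S.card - P.parts.card) * (Nat.factorial (P.parts.card - 1) : ℂ) *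
          ∏ T ∈ P.parts, pminor A T := by
  symm
  calc _ = ∑ σ : Perm (Fin n) with ∀ i ∉ S, σ i = i,
        (∑ P ∈ σ.invariantFinpartitions S, (-1 : ℂ) ^ (#S - #P.parts) * ((#P.parts - 1)! : ℂ))
          * ((Perm.sign σ : ℂ) * ∏ i ∈ S, A i (σ i)) := by
        simp_rw [prod_pminor_parts, pminor_blockRestrict, mul_sum, mul_ite, mul_zero]
        rw [sum_comm]
        refine sum_congr rfl fun σ _ => ?_
        rw [sum_mul, sum_ite_mem, univ_inter]
    _ = ∑ σ : Perm (Fin n) with ∀ i ∉ S, σ i = i,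
          if σ.IsCycleOn S then ∏ i ∈ S, A i (σ i) else 0 := by
        refine sum_congr rfl fun σ hσ => ?_
        rw [Perm.sum_invariantFinpartitions_eq_ite_isCycleOn (mem_filter.1 hσ).2 hS]
        split_ifs
        · rw [← mul_assoc, ← Int.cast_mul, ← Units.val_mul, Int.units_mul_self, Units.val_one,
            Int.cast_one, one_mul]
        · rw [zero_mul]
    _ = cycleSum A S := by
        rw [cycleSum, ← sum_filter, filter_filter]
        exact sum_congr (filter_congr fun _ _ => and_comm) fun _ _ => rfl
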